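/- Let 0 < p < 1 and 0 < q < 1 be constants. There exists a constant μ > 0 depending only on p and q such that for all sufficiently large n the following holds: for independent Erdős–Rényi random graphs G = G(n,p) and H = H(m,q) with m ≤ n, and k = ⌈n^{1/2}(log₂ n)^{2/3}⌉ ≤ m, the probability that G and H contain a common induced subgraph of size k (i.e., there exist k-element vertex subsets S₁ of G and S₂ of H whose induced subgraphs are isomorphic) is at most 2^{−μ n (log₂ n)^{4/3}}. -/

import Mathlib

set_option maxHeartbeats 1000000


/-!
STATEMENT 14: Let 0 < p < 1 and 0 < q < 1 be constants. There exists a constant μ > 0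
(depending only on p and q) such that for all sufficiently large n the following holds:
for independent Erdős–Rényi random graphs G = G(n,p) and H = H(m,q) with m ≤ n, and
k = ⌈n^{1/2}(log₂ n)^{2/3}⌉ ≤ m, the probability that G and H contain a common induced
subgraph of size k (i.e., there exist k-element vertex subsets S₁ of G and S₂ of H whose
induced subgraphs are isomorphic) is at most 2^{−μ n (log₂ n)^{4/3}}.
-/

open Classical

/-- Unordered pairs of distinct elements of `α`: the edge indicator index set. -/
abbrev EI (α : Type*) := {e : Sym2 α // ¬ e.IsDiag}

/-- The simple graph determined by an outcome of the edge indicators. -/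
def erGraph {n : ℕ} (ω : EI (Fin n) → Bool) : SimpleGraph (Fin n) where
  Adj u v := ∃ h : u ≠ v, ω ⟨s(u, v), by simp [h]⟩ = true
  symm := by
    constructor
    rintro u v ⟨h, hw⟩
    refine ⟨h.symm, ?_⟩
    rwa [show (⟨s(v, u), by simp [h.symm]⟩ : EI (Fin n)) =
        ⟨s(u, v), by simp [h]⟩ from Subtype.ext (Sym2.eq_swap)]
  loopless := by constructor; rintro v ⟨h, -⟩; exact h rfl

/-- Probability of an event for the joint (independent) pair of Erdős–Rényi random
graphs `G(n,p)` and `H(m,q)`, given by independent Bernoulli edge indicators. -/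
noncomputable def jointProb (n m : ℕ) (p q : ℝ)
    (A : (EI (Fin n) → Bool) → (EI (Fin m) → Bool) → Prop) : ℝ :=
  ∑ ω₁ : EI (Fin n) → Bool, ∑ ω₂ : EI (Fin m) → Bool,
    if A ω₁ ω₂ then
      (∏ e : EI (Fin n), if ω₁ e then p else 1 - p) *
        (∏ f : EI (Fin m), if ω₂ f then q else 1 - q)
    else 0

section Aux

/-- Indicator of a proposition (with a fixed decidability instance). -/
noncomputable def ind (P : Prop) : ℝ := if P then 1 else 0

lemma ind_of {P : Prop} (h : P) : ind P = 1 := if_pos h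
lemma ind_of_not {P : Prop} (h : ¬ P) : ind P = 0 := if_neg h
lemma ind_nonneg (P : Prop) : 0 ≤ ind P := by
  unfold ind; split <;> norm_num

variable {n m : ℕ} {p q : ℝ}

lemma weight_nonneg {ι : Type*} [Fintype ι] {r : ℝ} (h0 : 0 ≤ r) (h1 : r ≤ 1)
    (ω : ι → Bool) : 0 ≤ ∏ e : ι, if ω e then r else 1 - r :=
  Finset.prod_nonneg fun e _ => by split <;> linarith

lemma jointProb_eq (A : (EI (Fin n) → Bool) → (EI (Fin m) → Bool) → Prop) :
    jointProb n m p q A = ∑ ω₁ : EI (Fin n) → Bool, ∑ ω₂ : EI (Fin m) → Bool,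
      ind (A ω₁ ω₂) * ((∏ e : EI (Fin n), if ω₁ e then p else 1 - p) *
        (∏ f : EI (Fin m), if ω₂ f then q else 1 - q)) := by
  unfold jointProb
  refine Finset.sum_congr rfl fun ω₁ _ => Finset.sum_congr rfl fun ω₂ _ => ?_
  by_cases h : A ω₁ ω₂
  · rw [if_pos h, ind_of h, one_mul]
  · rw [if_neg h, ind_of_not h, zero_mul]

lemma jointProb_le_sum {ι : Type*} [Fintype ι]
    (hp0 : 0 ≤ p) (hp1 : p ≤ 1) (hq0 : 0 ≤ q) (hq1 : q ≤ 1)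
    {A : (EI (Fin n) → Bool) → (EI (Fin m) → Bool) → Prop}
    {B : ι → (EI (Fin n) → Bool) → (EI (Fin m) → Bool) → Prop}
    (h : ∀ ω₁ ω₂, A ω₁ ω₂ → ∃ i, B i ω₁ ω₂) :
    jointProb n m p q A ≤ ∑ i : ι, jointProb n m p q (B i) := by
  simp only [jointProb_eq]
  rw [show (∑ i : ι, ∑ ω₁ : EI (Fin n) → Bool, ∑ ω₂ : EI (Fin m) → Bool,
      ind (B i ω₁ ω₂) * ((∏ e : EI (Fin n), if ω₁ e then p else 1 - p) *
        (∏ f : EI (Fin m), if ω₂ f then q else 1 - q))) =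
      ∑ ω₁ : EI (Fin n) → Bool, ∑ ω₂ : EI (Fin m) → Bool, ∑ i : ι,
      ind (B i ω₁ ω₂) * ((∏ e : EI (Fin n), if ω₁ e then p else 1 - p) *
        (∏ f : EI (Fin m), if ω₂ f then q else 1 - q)) from by
    rw [Finset.sum_comm]
    exact Finset.sum_congr rfl fun ω₁ _ => Finset.sum_comm]
  refine Finset.sum_le_sum fun ω₁ _ => Finset.sum_le_sum fun ω₂ _ => ?_
  have hW : 0 ≤ (∏ e : EI (Fin n), if ω₁ e then p else 1 - p) *
      (∏ f : EI (Fin m), if ω₂ f then q else 1 - q) :=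
    mul_nonneg (weight_nonneg hp0 hp1 ω₁) (weight_nonneg hq0 hq1 ω₂)
  by_cases hA : A ω₁ ω₂
  · obtain ⟨i, hi⟩ := h ω₁ ω₂ hA
    rw [ind_of hA]
    calc 1 * ((∏ e : EI (Fin n), if ω₁ e then p else 1 - p) *
          (∏ f : EI (Fin m), if ω₂ f then q else 1 - q))
        = ind (B i ω₁ ω₂) * ((∏ e : EI (Fin n), if ω₁ e then p else 1 - p) *
          (∏ f : EI (Fin m), if ω₂ f then q else 1 - q)) := by rw [ind_of hi]
      _ ≤ _ := Finset.single_le_sum (f := fun j => ind (B j ω₁ ω₂) *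
            ((∏ e : EI (Fin n), if ω₁ e then p else 1 - p) *
            (∏ f : EI (Fin m), if ω₂ f then q else 1 - q)))
          (fun j _ => mul_nonneg (ind_nonneg _) hW) (Finset.mem_univ i)
  · rw [ind_of_not hA, zero_mul]
    exact Finset.sum_nonneg fun j _ => mul_nonneg (ind_nonneg _) hW

lemma jointProb_congr {A B : (EI (Fin n) → Bool) → (EI (Fin m) → Bool) → Prop}
    (h : ∀ ω₁ ω₂, A ω₁ ω₂ ↔ B ω₁ ω₂) : jointProb n m p q A = jointProb n m p q B := by
  simp only [jointProb_eq]
  refine Finset.sum_congr rfl fun ω₁ _ => Finset.sum_congr rfl fun ω₂ _ => ?_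
  by_cases hA : A ω₁ ω₂
  · rw [ind_of hA, ind_of ((h ω₁ ω₂).1 hA)]
  · rw [ind_of_not hA, ind_of_not (fun hb => hA ((h ω₁ ω₂).2 hb))]

lemma jointProb_false : jointProb n m p q (fun _ _ => False) = 0 := by
  simp [jointProb]

lemma sum_prod_bool {ι : Type*} [Fintype ι] [DecidableEq ι] (c : ι → Bool → ℝ) :
    ∑ ω : ι → Bool, ∏ i, c i (ω i) = ∏ i, (c i true + c i false) := by
  rw [show (∏ i, (c i true + c i false)) = ∏ i, ∑ b : Bool, c i b by simp,
    Fintype.prod_sum fun i (b : Bool) => c i b]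

lemma jointProb_cylinder (E : Finset (EI (Fin n))) (g : EI (Fin n) → EI (Fin m))
    (hg : Set.InjOn g E) :
    jointProb n m p q (fun ω₁ ω₂ => ∀ e ∈ E, ω₁ e = ω₂ (g e)) =
      (p * q + (1 - p) * (1 - q)) ^ E.card := by
  rw [jointProb_eq]
  rw [show (∑ ω₁ : EI (Fin n) → Bool, ∑ ω₂ : EI (Fin m) → Bool,
      ind (∀ e ∈ E, ω₁ e = ω₂ (g e)) * ((∏ e : EI (Fin n), if ω₁ e then p else 1 - p) *
        (∏ f : EI (Fin m), if ω₂ f then q else 1 - q))) =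
      ∑ ω₂ : EI (Fin m) → Bool, ∑ ω₁ : EI (Fin n) → Bool,
      ind (∀ e ∈ E, ω₁ e = ω₂ (g e)) * ((∏ e : EI (Fin n), if ω₁ e then p else 1 - p) *
        (∏ f : EI (Fin m), if ω₂ f then q else 1 - q)) from Finset.sum_comm]
  have step1 : ∀ ω₂ : EI (Fin m) → Bool,
      (∑ ω₁ : EI (Fin n) → Bool,
        ind (∀ e ∈ E, ω₁ e = ω₂ (g e)) * ((∏ e : EI (Fin n), if ω₁ e then p else 1 - p) *
          (∏ f : EI (Fin m), if ω₂ f then q else 1 - q))) =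
      (∏ f : EI (Fin m), if ω₂ f then q else 1 - q) *
        ∏ e ∈ E, (if ω₂ (g e) then p else 1 - p) := by
    intro ω₂
    have h1 : ∀ ω₁ : EI (Fin n) → Bool,
        ind (∀ e ∈ E, ω₁ e = ω₂ (g e)) * (∏ e : EI (Fin n), if ω₁ e then p else 1 - p)
        = ∏ e : EI (Fin n), ((if ω₁ e then p else 1 - p) *
            (if e ∈ E then ind (ω₁ e = ω₂ (g e)) else 1)) := by
      intro ω₁
      by_cases hc : ∀ e ∈ E, ω₁ e = ω₂ (g e)
      · rw [ind_of hc, one_mul]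
        refine Finset.prod_congr rfl fun e _ => ?_
        by_cases he : e ∈ E
        · rw [if_pos he, ind_of (hc e he), mul_one]
        · rw [if_neg he, mul_one]
      · rw [ind_of_not hc, zero_mul]
        push_neg at hc; obtain ⟨e, heE, hne⟩ := hc
        refine (Finset.prod_eq_zero (Finset.mem_univ e) ?_).symm
        rw [if_pos heE, ind_of_not hne, mul_zero]
    have h2 : ∀ e : EI (Fin n),
        ((if (true : Bool) then p else 1 - p) *
          (if e ∈ E then ind ((true : Bool) = ω₂ (g e)) else 1) +
        (if (false : Bool) then p else 1 - p) *
          (if e ∈ E then ind ((false : Bool) = ω₂ (g e)) else 1))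
        = if e ∈ E then (if ω₂ (g e) then p else 1 - p) else 1 := by
      intro e
      by_cases he : e ∈ E
      · cases hb : ω₂ (g e) <;>
          simp [he, hb, ind_of, ind_of_not, ind] <;> norm_num
      · simp [he]
    calc (∑ ω₁ : EI (Fin n) → Bool,
        ind (∀ e ∈ E, ω₁ e = ω₂ (g e)) * ((∏ e : EI (Fin n), if ω₁ e then p else 1 - p) *
          (∏ f : EI (Fin m), if ω₂ f then q else 1 - q)))
        = (∑ ω₁ : EI (Fin n) → Bool,
            ind (∀ e ∈ E, ω₁ e = ω₂ (g e)) * (∏ e : EI (Fin n), if ω₁ e then p else 1 - p)) *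
            (∏ f : EI (Fin m), if ω₂ f then q else 1 - q) := by
          rw [Finset.sum_mul]
          exact Finset.sum_congr rfl fun ω₁ _ => (mul_assoc _ _ _).symm
      _ = (∏ e : EI (Fin n), (if e ∈ E then (if ω₂ (g e) then p else 1 - p) else 1)) *
            (∏ f : EI (Fin m), if ω₂ f then q else 1 - q) := by
          congr 1
          simp only [h1]
          exact (sum_prod_bool (fun e b => (if b then p else 1 - p) *
            (if e ∈ E then ind (b = ω₂ (g e)) else 1))).trans
            (Finset.prod_congr rfl fun e _ => h2 e)
      _ = _ := by
          rw [Finset.prod_ite_mem, Finset.univ_inter, mul_comm]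
  have h3 : ∀ ω₂ : EI (Fin m) → Bool,
      (∏ f : EI (Fin m), if ω₂ f then q else 1 - q) *
        ∏ e ∈ E, (if ω₂ (g e) then p else 1 - p)
      = ∏ f : EI (Fin m), ((if ω₂ f then q else 1 - q) *
          (if f ∈ E.image g then (if ω₂ f then p else 1 - p) else 1)) := by
    intro ω₂
    rw [Finset.prod_mul_distrib]
    congr 1
    have himg : ∏ x ∈ E.image g, (if ω₂ x then p else 1 - p)
        = ∏ e ∈ E, (if ω₂ (g e) then p else 1 - p) :=
      Finset.prod_image (fun x hx y hy hxy => hg hx hy hxy)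
    rw [← himg, ← Finset.univ_inter (E.image g), ← Finset.prod_ite_mem, Finset.univ_inter]
  refine ((Finset.sum_congr rfl fun ω₂ _ => (step1 ω₂).trans (h3 ω₂)).trans ?_)
  refine ((sum_prod_bool (fun f b => (if b then q else 1 - q) *
      (if f ∈ E.image g then (if b then p else 1 - p) else 1))).trans ?_)
  have h4 : ∀ f : EI (Fin m),
      ((if (true : Bool) then q else 1 - q) *
        (if f ∈ E.image g then (if (true : Bool) then p else 1 - p) else 1) +
      (if (false : Bool) then q else 1 - q) *
        (if f ∈ E.image g then (if (false : Bool) then p else 1 - p) else 1))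
      = if f ∈ E.image g then (p * q + (1 - p) * (1 - q)) else 1 := by
    intro f
    by_cases hf : f ∈ E.image g <;> simp [hf] <;> ring
  rw [Finset.prod_congr rfl fun f _ => h4 f, Finset.prod_ite_mem, Finset.univ_inter,
    Finset.prod_const, Finset.card_image_of_injOn hg]

noncomputable def edgesIn {n : ℕ} (S : Finset (Fin n)) : Finset (EI (Fin n)) :=
  Finset.univ.filter (fun e => ∀ x ∈ e.1, x ∈ S)

lemma edgesIn_rep {S : Finset (Fin n)} {e : EI (Fin n)} (he : e ∈ edgesIn S) :
    ∃ a b, a ≠ b ∧ a ∈ S ∧ b ∈ S ∧ e.1 = s(a, b) := by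
  obtain ⟨x, hd⟩ := e
  induction x using Sym2.inductionOn with
  | hf a b =>
    simp only [edgesIn, Finset.mem_filter] at he
    refine ⟨a, b, ?_, ?_, ?_, rfl⟩
    · exact fun hab => hd (by simp [hab])
    · exact he.2 a (by simp)
    · exact he.2 b (by simp)

lemma mem_edgesIn {S : Finset (Fin n)} {a b : Fin n} (hab : a ≠ b)
    (ha : a ∈ S) (hb : b ∈ S) :
    (⟨s(a, b), by simp [hab]⟩ : EI (Fin n)) ∈ edgesIn S := by
  simp only [edgesIn, Finset.mem_filter, Finset.mem_univ, true_and]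
  intro x hx
  rcases Sym2.mem_iff.1 hx with rfl | rfl <;> assumption

lemma card_edgesIn (S : Finset (Fin n)) : (edgesIn S).card = S.card.choose 2 := by
  rw [← Sym2.card_image_offDiag]
  apply Finset.card_bij (fun e _ => e.1)
  · intro e he
    obtain ⟨a, b, hab, ha, hb, hrep⟩ := edgesIn_rep he
    rw [hrep]
    exact Finset.mem_image.2 ⟨(a, b), Finset.mem_offDiag.2 ⟨ha, hb, hab⟩, rfl⟩
  · intro e₁ h₁ e₂ h₂ hv
    exact Subtype.ext hv
  · intro x hx
    obtain ⟨⟨a, b⟩, hab, rfl⟩ := Finset.mem_image.1 hx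
    rw [Finset.mem_offDiag] at hab
    exact ⟨⟨s(a, b), by simp [hab.2.2]⟩, mem_edgesIn hab.2.2 hab.1 hab.2.1, rfl⟩

noncomputable def extMap {n m : ℕ} (f : Fin n → Fin m) (j0 : EI (Fin m)) :
    EI (Fin n) → EI (Fin m) :=
  fun e => if h : ¬ (Sym2.map f e.1).IsDiag then ⟨Sym2.map f e.1, h⟩ else j0

lemma extMap_edge (f : Fin n → Fin m) (j0 : EI (Fin m)) {a b : Fin n}
    (hab : a ≠ b) (hfab : f a ≠ f b) :
    extMap f j0 ⟨s(a, b), by simp [hab]⟩ = ⟨s(f a, f b), by simp [hfab]⟩ := by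
  unfold extMap
  rw [dif_pos]
  · exact Subtype.ext (by simp)
  · simp [hfab]

lemma extMap_injOn {S : Finset (Fin n)} {f : Fin n → Fin m} (j0 : EI (Fin m))
    (hf : Set.InjOn f S) : Set.InjOn (extMap f j0) (edgesIn S) := by
  intro e₁ h₁ e₂ h₂ heq
  obtain ⟨a, b, hab, ha, hb, hrep₁⟩ := edgesIn_rep h₁
  obtain ⟨c, d, hcd, hc, hd, hrep₂⟩ := edgesIn_rep h₂
  have hfab : f a ≠ f b := fun hfe => hab (hf ha hb hfe)
  have hfcd : f c ≠ f d := fun hfe => hcd (hf hc hd hfe)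
  have he₁ : e₁ = ⟨s(a, b), by simp [hab]⟩ := Subtype.ext hrep₁
  have he₂ : e₂ = ⟨s(c, d), by simp [hcd]⟩ := Subtype.ext hrep₂
  rw [he₁, he₂, extMap_edge f j0 hab hfab, extMap_edge f j0 hcd hfcd] at heq
  have hval : s(f a, f b) = s(f c, f d) := congrArg Subtype.val heq
  rw [he₁, he₂]
  refine Subtype.ext ?_
  show s(a, b) = s(c, d)
  rcases Sym2.eq_iff.1 hval with ⟨h1, h2⟩ | ⟨h1, h2⟩
  · rw [hf ha hc h1, hf hb hd h2]
  · rw [hf ha hd h1, hf hb hc h2, Sym2.eq_swap]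

lemma per_witness (hp0 : 0 ≤ p) (hp1 : p ≤ 1) (hq0 : 0 ≤ q) (hq1 : q ≤ 1)
    (k : ℕ) (S : Finset (Fin n)) (f : Fin n → Fin m) (j0 : EI (Fin m)) :
    jointProb n m p q (fun ω₁ ω₂ => S.card = k ∧ Set.InjOn f S ∧
        ∀ e ∈ edgesIn S, ω₁ e = ω₂ (extMap f j0 e)) ≤
      (p * q + (1 - p) * (1 - q)) ^ (k.choose 2) := by
  have hρ : 0 ≤ p * q + (1 - p) * (1 - q) := by nlinarith
  by_cases hside : S.card = k ∧ Set.InjOn f ↑S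
  · rw [jointProb_congr (B := fun ω₁ ω₂ => ∀ e ∈ edgesIn S, ω₁ e = ω₂ (extMap f j0 e))
      (fun ω₁ ω₂ => by
        constructor
        · rintro ⟨-, -, h⟩; exact h
        · intro h; exact ⟨hside.1, hside.2, h⟩)]
    rw [jointProb_cylinder _ _ (extMap_injOn j0 hside.2), card_edgesIn, hside.1]
  · rw [jointProb_congr (B := fun _ _ => False) (fun ω₁ ω₂ => by
        constructor
        · rintro ⟨h1, h2, -⟩; exact hside ⟨h1, h2⟩
        · intro h; exact h.elim), jointProb_false]
    positivity

lemma exists_witness {k : ℕ} (hm2 : 2 ≤ m) (j0 : EI (Fin m))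
    (ω₁ : EI (Fin n) → Bool) (ω₂ : EI (Fin m) → Bool)
    (S₁ : Finset (Fin n)) (hS₁ : S₁.card = k) (S₂ : Finset (Fin m))
    (φ : (erGraph ω₁).induce (S₁ : Set (Fin n)) ≃g (erGraph ω₂).induce (S₂ : Set (Fin m))) :
    ∃ f : Fin n → Fin m, S₁.card = k ∧ Set.InjOn f S₁ ∧
      ∀ e ∈ edgesIn S₁, ω₁ e = ω₂ (extMap f j0 e) := by
  have hd0 : (0 : ℕ) < m := by omega
  set f : Fin n → Fin m := fun x =>
    if h : x ∈ S₁ then (φ ⟨x, Finset.mem_coe.2 h⟩ : {y // y ∈ (S₂ : Set (Fin m))}).1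
    else ⟨0, hd0⟩ with hf
  have hfval : ∀ x (hx : x ∈ S₁), f x = (φ ⟨x, Finset.mem_coe.2 hx⟩ :
      {y // y ∈ (S₂ : Set (Fin m))}).1 := by
    intro x hx; simp only [hf, dif_pos hx]
  have hinj : Set.InjOn f S₁ := by
    intro x hx y hy hxy
    rw [Finset.mem_coe] at hx hy
    rw [hfval x hx, hfval y hy] at hxy
    have := φ.toEquiv.injective (Subtype.ext hxy)
    exact congrArg Subtype.val this
  refine ⟨f, hS₁, hinj, ?_⟩
  intro e he
  obtain ⟨a, b, hab, ha, hb, hrep⟩ := edgesIn_rep he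
  have hfab : f a ≠ f b := fun hfe => hab (hinj ha hb hfe)
  have he' : e = ⟨s(a, b), by simp [hab]⟩ := Subtype.ext hrep
  rw [he', extMap_edge f j0 hab hfab]
  have haS : (a : Fin n) ∈ (S₁ : Set (Fin n)) := Finset.mem_coe.2 ha
  have hbS : (b : Fin n) ∈ (S₁ : Set (Fin n)) := Finset.mem_coe.2 hb
  have hadj : (erGraph ω₁).Adj a b ↔ (erGraph ω₂).Adj (f a) (f b) := by
    have h1 : ((erGraph ω₁).induce (S₁ : Set (Fin n))).Adj ⟨a, haS⟩ ⟨b, hbS⟩ ↔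
        (erGraph ω₁).Adj a b := Iff.rfl
    have h2 : ((erGraph ω₂).induce (S₂ : Set (Fin m))).Adj
        (φ ⟨a, haS⟩) (φ ⟨b, hbS⟩) ↔
        ((erGraph ω₁).induce (S₁ : Set (Fin n))).Adj ⟨a, haS⟩ ⟨b, hbS⟩ :=
      φ.map_rel_iff
    have h3 : ((erGraph ω₂).induce (S₂ : Set (Fin m))).Adj
        (φ ⟨a, haS⟩) (φ ⟨b, hbS⟩) ↔
        (erGraph ω₂).Adj (f a) (f b) := by
      rw [hfval a ha, hfval b hb]
      exact Iff.rfl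
    rw [← h1, ← h2, h3]
  have hw1 : (erGraph ω₁).Adj a b ↔ ω₁ ⟨s(a, b), by simp [hab]⟩ = true := by
    constructor
    · rintro ⟨h2, hw⟩; exact hw
    · intro hw; exact ⟨hab, hw⟩
  have hw2 : (erGraph ω₂).Adj (f a) (f b) ↔ ω₂ ⟨s(f a, f b), by simp [hfab]⟩ = true := by
    constructor
    · rintro ⟨h2, hw⟩; exact hw
    · intro hw; exact ⟨hfab, hw⟩
  rw [hw1, hw2] at hadj
  cases hx : ω₁ (⟨s(a, b), by simp [hab]⟩ : EI (Fin n)) <;>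
    cases hy : ω₂ (⟨s(f a, f b), by simp [hfab]⟩ : EI (Fin m)) <;> simp_all

end Aux

theorem prob_large_common_subgraph_le (p q : ℝ) (hp0 : 0 < p) (hp1 : p < 1)
    (hq0 : 0 < q) (hq1 : q < 1) :
    ∃ μ : ℝ, 0 < μ ∧ ∃ N : ℕ, ∀ n : ℕ, N ≤ n → ∀ m : ℕ, m ≤ n →
      ∀ k : ℕ, k = ⌈(n : ℝ) ^ ((1 : ℝ) / 2) * (Real.logb 2 n) ^ ((2 : ℝ) / 3)⌉₊ →
        k ≤ m →
        jointProb n m p q (fun ω₁ ω₂ =>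
            ∃ S₁ : Finset (Fin n), S₁.card = k ∧ ∃ S₂ : Finset (Fin m), S₂.card = k ∧
              Nonempty ((erGraph ω₁).induce (S₁ : Set (Fin n)) ≃g
                (erGraph ω₂).induce (S₂ : Set (Fin m)))) ≤
          (2 : ℝ) ^ (-(μ * n * (Real.logb 2 n) ^ ((4 : ℝ) / 3))) := by
  have hρ0 : (0:ℝ) < p * q + (1 - p) * (1 - q) := by nlinarith
  have hρ1 : p * q + (1 - p) * (1 - q) < 1 := by nlinarith
  set ρ : ℝ := p * q + (1 - p) * (1 - q) with hρdef
  set c : ℝ := -Real.logb 2 ρ with hcdef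
  have hc0 : 0 < c := by
    have : Real.logb 2 ρ < 0 := Real.logb_neg (by norm_num) hρ0 hρ1
    simp only [hcdef]; linarith
  refine ⟨c / 8, by positivity, ?_⟩
  set M : ℝ := max 1 ((16 / c) ^ (3:ℕ)) with hM
  have hM1 : (1:ℝ) ≤ M := le_max_left _ _
  refine ⟨max 4 ⌈(2 : ℝ) ^ M⌉₊, ?_⟩
  intro n hn m hm k hk hkm
  have hn4 : 4 ≤ n := le_trans (le_max_left _ _) hn
  have hn0 : (0:ℝ) < n := by
    have : (0:ℕ) < n := by omega
    exact_mod_cast this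
  set L : ℝ := Real.logb 2 n with hLdef
  have hnM : (2:ℝ) ^ M ≤ n := by
    have h1 : ⌈(2 : ℝ) ^ M⌉₊ ≤ n := le_trans (le_max_right _ _) hn
    calc (2:ℝ) ^ M ≤ (⌈(2 : ℝ) ^ M⌉₊ : ℝ) := Nat.le_ceil _
      _ ≤ n := by exact_mod_cast h1
  have hLM : M ≤ L := by
    have := Real.logb_le_logb_of_le (b := 2) (by norm_num)
      (Real.rpow_pos_of_pos two_pos M) hnM
    rwa [Real.logb_rpow (by norm_num) (by norm_num)] at this
  have hL1 : (1:ℝ) ≤ L := le_trans hM1 hLM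
  have hL0 : (0:ℝ) < L := lt_of_lt_of_le one_pos hL1
  -- k is large
  have hkreal : (n : ℝ) ^ ((1 : ℝ) / 2) * L ^ ((2 : ℝ) / 3) ≤ k := by
    rw [hk]; exact Nat.le_ceil _
  have h42 : (4:ℝ) ^ ((1:ℝ)/2) = 2 := by
    rw [show (4:ℝ) = (2:ℝ) ^ (2:ℕ) by norm_num, ← Real.rpow_natCast 2 2,
      ← Real.rpow_mul (by norm_num)]
    norm_num
  have h4n : (4:ℝ) ≤ (n:ℝ) := by exact_mod_cast hn4
  have hn12 : (2:ℝ) ≤ (n : ℝ) ^ ((1 : ℝ) / 2) := by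
    calc (2:ℝ) = (4:ℝ) ^ ((1:ℝ)/2) := h42.symm
      _ ≤ (n : ℝ) ^ ((1 : ℝ) / 2) := Real.rpow_le_rpow (by norm_num) h4n (by norm_num)
  have hL23 : (1:ℝ) ≤ L ^ ((2:ℝ)/3) := Real.one_le_rpow hL1 (by norm_num)
  have hk2 : 2 ≤ k := by
    have : (2:ℝ) ≤ (k:ℝ) := by
      calc (2:ℝ) = 2 * 1 := by ring
        _ ≤ (n : ℝ) ^ ((1 : ℝ) / 2) * L ^ ((2 : ℝ) / 3) :=
            mul_le_mul hn12 hL23 (by norm_num) (by positivity)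
        _ ≤ k := hkreal
    exact_mod_cast this
  have hm2 : 2 ≤ m := le_trans hk2 hkm
  -- the union bound
  have j0ne : (⟨0, by omega⟩ : Fin m) ≠ ⟨1, by omega⟩ := by
    intro hcon
    have := congrArg Fin.val hcon
    simp at this
  set j0 : EI (Fin m) := ⟨s((⟨0, by omega⟩ : Fin m), (⟨1, by omega⟩ : Fin m)),
    by simp [j0ne]⟩ with hj0
  have hub : jointProb n m p q (fun ω₁ ω₂ =>
      ∃ S₁ : Finset (Fin n), S₁.card = k ∧ ∃ S₂ : Finset (Fin m), S₂.card = k ∧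
        Nonempty ((erGraph ω₁).induce (S₁ : Set (Fin n)) ≃g
          (erGraph ω₂).induce (S₂ : Set (Fin m)))) ≤
      ∑ i : Finset (Fin n) × (Fin n → Fin m), jointProb n m p q (fun ω₁ ω₂ =>
        (i.1).card = k ∧ Set.InjOn i.2 i.1 ∧
          ∀ e ∈ edgesIn i.1, ω₁ e = ω₂ (extMap i.2 j0 e)) := by
    refine jointProb_le_sum hp0.le hp1.le hq0.le hq1.le ?_
    rintro ω₁ ω₂ ⟨S₁, hS₁, S₂, hS₂, ⟨φ⟩⟩
    obtain ⟨f, h1, h2, h3⟩ := exists_witness hm2 j0 ω₁ ω₂ S₁ hS₁ S₂ φ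
    exact ⟨(S₁, f), h1, h2, h3⟩
  have hcount : jointProb n m p q (fun ω₁ ω₂ =>
      ∃ S₁ : Finset (Fin n), S₁.card = k ∧ ∃ S₂ : Finset (Fin m), S₂.card = k ∧
        Nonempty ((erGraph ω₁).induce (S₁ : Set (Fin n)) ≃g
          (erGraph ω₂).induce (S₂ : Set (Fin m)))) ≤
      ((2:ℝ) ^ n * (m:ℝ) ^ n) * ρ ^ (k.choose 2) := by
    refine hub.trans ?_
    calc (∑ i : Finset (Fin n) × (Fin n → Fin m), jointProb n m p q (fun ω₁ ω₂ =>
        (i.1).card = k ∧ Set.InjOn i.2 i.1 ∧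
          ∀ e ∈ edgesIn i.1, ω₁ e = ω₂ (extMap i.2 j0 e)))
        ≤ ∑ _i : Finset (Fin n) × (Fin n → Fin m), ρ ^ (k.choose 2) :=
          Finset.sum_le_sum fun i _ =>
            per_witness hp0.le hp1.le hq0.le hq1.le k i.1 i.2 j0
      _ = ((2:ℝ) ^ n * (m:ℝ) ^ n) * ρ ^ (k.choose 2) := by
          rw [Finset.sum_const, Finset.card_univ, Fintype.card_prod,
            Fintype.card_finset, Fintype.card_fun, Fintype.card_fin, Fintype.card_fin,
            nsmul_eq_mul]
          push_cast
          ring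
  refine hcount.trans ?_
  -- now purely numeric
  set K : ℝ := (k.choose 2 : ℝ) with hKdef
  have hKval : K = (k:ℝ) * ((k:ℝ) - 1) / 2 := by
    rw [hKdef, Nat.cast_choose_two]
  have hkk : (n:ℝ) * L ^ ((4:ℝ)/3) ≤ (k:ℝ) * (k:ℝ) := by
    have ht0 : (0:ℝ) ≤ (n : ℝ) ^ ((1 : ℝ) / 2) * L ^ ((2 : ℝ) / 3) := by positivity
    have hsq : ((n : ℝ) ^ ((1 : ℝ) / 2) * L ^ ((2 : ℝ) / 3)) *
        ((n : ℝ) ^ ((1 : ℝ) / 2) * L ^ ((2 : ℝ) / 3)) = (n:ℝ) * L ^ ((4:ℝ)/3) := by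
      rw [show ((n : ℝ) ^ ((1 : ℝ) / 2) * L ^ ((2 : ℝ) / 3)) *
          ((n : ℝ) ^ ((1 : ℝ) / 2) * L ^ ((2 : ℝ) / 3)) =
          ((n : ℝ) ^ ((1 : ℝ) / 2) * (n : ℝ) ^ ((1 : ℝ) / 2)) *
          (L ^ ((2 : ℝ) / 3) * L ^ ((2 : ℝ) / 3)) by ring,
        ← Real.rpow_add hn0, ← Real.rpow_add hL0]
      norm_num
    calc (n:ℝ) * L ^ ((4:ℝ)/3) = _ := hsq.symm
      _ ≤ (k:ℝ) * (k:ℝ) := mul_le_mul hkreal hkreal ht0 (le_trans ht0 hkreal)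
  have hK4 : (n:ℝ) * L ^ ((4:ℝ)/3) ≤ 4 * K := by
    have hk2r : (2:ℝ) ≤ (k:ℝ) := by exact_mod_cast hk2
    nlinarith [hkk, hKval]
  -- convert both factors to rpow with base 2
  have hρeq : ρ ^ (k.choose 2) = (2:ℝ) ^ (-(c * K)) := by
    rw [show ρ = (2:ℝ) ^ (Real.logb 2 ρ) from
      (Real.rpow_logb two_pos (by norm_num) hρ0).symm]
    rw [← Real.rpow_natCast ((2:ℝ) ^ (Real.logb 2 ρ)) (k.choose 2),
      ← Real.rpow_mul (by norm_num)]
    congr 1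
    simp only [hcdef, hKdef]
    ring
  have hcard : ((2:ℝ) ^ n * (m:ℝ) ^ n) ≤ (2:ℝ) ^ ((n:ℝ) + (n:ℝ) * L) := by
    have hmn : ((m:ℝ)) ^ n ≤ ((n:ℝ)) ^ n :=
      pow_le_pow_left₀ (by positivity) (by exact_mod_cast hm) n
    have hneq : (n:ℝ) = (2:ℝ) ^ L := (Real.rpow_logb two_pos (by norm_num) hn0).symm
    calc (2:ℝ) ^ n * (m:ℝ) ^ n ≤ (2:ℝ) ^ n * (n:ℝ) ^ n := by
          apply mul_le_mul_of_nonneg_left hmn (by positivity)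
      _ = (2:ℝ) ^ ((n:ℝ) + (n:ℝ) * L) := by
          conv_lhs => rw [hneq, ← Real.rpow_natCast ((2:ℝ) ^ L) n,
            ← Real.rpow_mul (by norm_num : (0:ℝ) ≤ 2),
            ← Real.rpow_natCast (2:ℝ) n, ← Real.rpow_add two_pos]
          congr 1
          ring
  have hexp : (n:ℝ) + (n:ℝ) * L + -(c * K) ≤ -(c / 8 * (n:ℝ) * L ^ ((4:ℝ)/3)) := by
    have hL13 : 16 / c ≤ L ^ ((1:ℝ)/3) := by
      have h1 : ((16 / c) ^ (3:ℕ) : ℝ) ≤ L := le_trans (le_max_right _ _) hLM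
      have h2 : (((16 / c) ^ (3:ℕ) : ℝ)) ^ ((1:ℝ)/3) ≤ L ^ ((1:ℝ)/3) :=
        Real.rpow_le_rpow (by positivity) h1 (by norm_num)
      calc 16 / c = (((16 / c) ^ (3:ℕ) : ℝ)) ^ ((1:ℝ)/3) := by
            rw [← Real.rpow_natCast (16 / c) 3, ← Real.rpow_mul (by positivity)]
            norm_num
        _ ≤ L ^ ((1:ℝ)/3) := h2
    have hsplit : L ^ ((4:ℝ)/3) = L * L ^ ((1:ℝ)/3) := by
      rw [show (4:ℝ)/3 = 1 + 1/3 by norm_num, Real.rpow_add hL0, Real.rpow_one]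
    have hnL : (n:ℝ) + (n:ℝ) * L ≤ 2 * ((n:ℝ) * L) := by nlinarith
    have hbig : 2 * ((n:ℝ) * L) ≤ c / 8 * (n:ℝ) * L ^ ((4:ℝ)/3) := by
      rw [hsplit]
      have : (16:ℝ) ≤ c * L ^ ((1:ℝ)/3) := by
        have := mul_le_mul_of_nonneg_left hL13 hc0.le
        rw [mul_div_cancel₀ (16:ℝ) (ne_of_gt hc0)] at this
        linarith
      nlinarith [mul_pos hn0 hL0]
    have hcK : c / 4 * ((n:ℝ) * L ^ ((4:ℝ)/3)) ≤ c * K := by nlinarith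
    nlinarith
  calc ((2:ℝ) ^ n * (m:ℝ) ^ n) * ρ ^ (k.choose 2)
      ≤ (2:ℝ) ^ ((n:ℝ) + (n:ℝ) * L) * (2:ℝ) ^ (-(c * K)) := by
        rw [hρeq]
        exact mul_le_mul_of_nonneg_right hcard (by positivity)
    _ = (2:ℝ) ^ ((n:ℝ) + (n:ℝ) * L + -(c * K)) := (Real.rpow_add two_pos _ _).symm
    _ ≤ (2:ℝ) ^ (-(c / 8 * (n:ℝ) * L ^ ((4:ℝ)/3))) :=
        Real.rpow_le_rpow_of_exponent_le (by norm_num) hexp
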